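/- For every n ≥ 1 and every A ∈ M₂(ℂ)^{⊗n}, one has ‖A − 2^{−n}tr(A)𝟏‖₁ ≤ π · ∑_{j=1}^n ‖d_j A‖₁, i.e. ‖A − 2^{−n}tr(A)𝟏‖₁ ≤ π · Inf¹(A). (Quantum L¹-Poincaré inequality.) -/

import Mathlib

open Matrix
open scoped BigOperators Classical ComplexOrder

namespace QPaper

variable {ι : Type*} [Fintype ι] [DecidableEq ι]

/-- The positive semidefinite square root of a matrix (junk value `0` if the matrix is
not positive semidefinite). -/
noncomputable def psdSqrt (X : Matrix ι ι ℂ) : Matrix ι ι ℂ :=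
  if h : X.PosSemidef then
    (h.1.eigenvectorUnitary : Matrix ι ι ℂ) *
      diagonal ((↑) ∘ (Real.sqrt ·) ∘ h.1.eigenvalues) *
      (star h.1.eigenvectorUnitary : Matrix ι ι ℂ)
  else 0

/-- The normalized trace (Schatten 1) norm `‖X‖₁ = tr |X| / card ι`. -/
noncomputable def normOne (X : Matrix ι ι ℂ) : ℝ :=
  (psdSqrt (Xᴴ * X)).trace.re / Fintype.card ι

/-- The normalized Schatten 2 norm `‖X‖₂ = (tr (X* X) / card ι)^{1/2}`. -/
noncomputable def normTwo (X : Matrix ι ι ℂ) : ℝ :=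
  Real.sqrt ((Xᴴ * X).trace.re / Fintype.card ι)

/-- The operator norm of a matrix, acting on the Euclidean space. -/
noncomputable def opNorm (X : Matrix ι ι ℂ) : ℝ :=
  ‖Matrix.toEuclideanCLM (𝕜 := ℂ) X‖

/-- The Loewner order: `X ≤ Y` iff `Y - X` is positive semidefinite. -/
def LoewnerLE (X Y : Matrix ι ι ℂ) : Prop := (Y - X).PosSemidef

/-- Configurations of `n` qubits. -/
abbrev QState (n : ℕ) := Fin n → Fin 2

/-- The algebra of `n`-qubit observables `M₂(ℂ)^{⊗ n}`. -/
abbrev Obs (n : ℕ) := Matrix (QState n) (QState n) ℂ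

/-- The conditional expectation `E_S = ⊗_{j ∈ S} (½ tr)(·) 𝟏 ⊗ id` replacing each qubit in `S`
by its normalized partial trace:  `E_S(A) = 2^{-|S|} tr_S(A) ⊗ 𝟏_S`. -/
noncomputable def ESet {n : ℕ} (S : Finset (Fin n)) (A : Obs n) : Obs n :=
  Matrix.of fun x y =>
    if ∀ j ∈ S, x j = y j then
      ((2 : ℂ) ^ n)⁻¹ *
        ∑ z : QState n,
          A (fun j => if j ∈ S then z j else x j) (fun j => if j ∈ S then z j else y j)
    else 0

/-- The derivation `d_j = 𝕀^{⊗(j-1)} ⊗ (𝕀 - ½ tr(·) 𝟏) ⊗ 𝕀^{⊗(n-j)}`. -/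
noncomputable def dCoord {n : ℕ} (j : Fin n) (A : Obs n) : Obs n := A - ESet {j} A

/-- The quantum depolarizing semigroup `P_t = (e^{-t} 𝕀 + (1 - e^{-t}) ½ tr(·) 𝟏)^{⊗ n}`. -/
noncomputable def Pt {n : ℕ} (t : ℝ) (A : Obs n) : Obs n :=
  ∑ S : Finset (Fin n),
    (Real.exp (-t) ^ (n - S.card) * (1 - Real.exp (-t)) ^ S.card) • ESet S A

/-- The generator `𝓛 = ∑_j d_j`. -/
noncomputable def Lgen {n : ℕ} (A : Obs n) : Obs n := ∑ j : Fin n, dCoord j A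

/-- The carré du champ `Γ(A) = ½ (𝓛(A*) A + A* 𝓛(A) - 𝓛(A* A))`. -/
noncomputable def carre {n : ℕ} (A : Obs n) : Obs n :=
  (2 : ℂ)⁻¹ • (Lgen Aᴴ * A + Aᴴ * Lgen A - Lgen (Aᴴ * A))

/-- The total `L¹`-influence `Inf¹(A) = ∑_j ‖d_j A‖₁`. -/
noncomputable def inf1 {n : ℕ} (A : Obs n) : ℝ := ∑ j : Fin n, normOne (dCoord j A)

/-- The total `L²`-influence `Inf²(A) = ∑_j ‖d_j A‖₂²`. -/
noncomputable def inf2 {n : ℕ} (A : Obs n) : ℝ := ∑ j : Fin n, normTwo (dCoord j A) ^ 2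

/-- The mean part `2^{-n} tr(A) 𝟏`. -/
noncomputable def meanPart {n : ℕ} (A : Obs n) : Obs n :=
  (A.trace / (2 : ℂ) ^ n) • (1 : Obs n)

/-- The variance `Var(A) = ‖A - 2^{-n} tr(A) 𝟏‖₂²`. -/
noncomputable def Var {n : ℕ} (A : Obs n) : ℝ := normTwo (A - meanPart A) ^ 2


/-- **Quantum L¹-Poincaré inequality.** For every `n ≥ 1` and every `A ∈ M₂(ℂ)^{⊗n}`,
`‖A − 2^{−n} tr(A) 𝟏‖₁ ≤ π · ∑_j ‖d_j A‖₁ = π · Inf¹(A)`. -/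
lemma psdSqrt_of {X : Matrix ι ι ℂ} (hX : X.PosSemidef) : psdSqrt X =
    (hX.1.eigenvectorUnitary : Matrix ι ι ℂ) *
      diagonal ((↑) ∘ (Real.sqrt ·) ∘ hX.1.eigenvalues) *
      (star hX.1.eigenvectorUnitary : Matrix ι ι ℂ) := dif_pos hX

section
open scoped MatrixOrder

lemma psdSqrt_eq_cfc {X : Matrix ι ι ℂ} (hX : X.PosSemidef) : psdSqrt X = CFC.sqrt X := by
  have h0 : (0 : Matrix ι ι ℂ) ≤ X := Matrix.nonneg_iff_posSemidef.mpr hX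
  rw [CFC.sqrt_eq_real_sqrt X h0, cfcₙ_eq_cfc, Matrix.IsHermitian.cfc_eq hX.1,
    Matrix.IsHermitian.cfc, Unitary.conjStarAlgAut_apply, psdSqrt_of hX]
  rfl

lemma psdSqrt_psd {X : Matrix ι ι ℂ} (hX : X.PosSemidef) : (psdSqrt X).PosSemidef := by
  rw [psdSqrt_eq_cfc hX]
  exact Matrix.nonneg_iff_posSemidef.mp (CFC.sqrt_nonneg X)

lemma psdSqrt_mul_self {X : Matrix ι ι ℂ} (hX : X.PosSemidef) : psdSqrt X * psdSqrt X = X := by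
  rw [psdSqrt_eq_cfc hX]
  exact CFC.sqrt_mul_sqrt_self X (Matrix.nonneg_iff_posSemidef.mpr hX)

lemma psdSqrt_unique {M S : Matrix ι ι ℂ} (hS : S.PosSemidef) (h : S * S = M) :
    psdSqrt M = S := by
  have hM : M.PosSemidef := by
    rw [← h]
    nth_rewrite 1 [← hS.1.eq]
    exact Matrix.posSemidef_conjTranspose_mul_self S
  rw [psdSqrt_eq_cfc hM]
  exact CFC.sqrt_unique h (Matrix.nonneg_iff_posSemidef.mpr hS)

end

noncomputable def traceAbs (X : Matrix ι ι ℂ) : ℝ := (psdSqrt (Xᴴ * X)).trace.re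

lemma normOne_eq (X : Matrix ι ι ℂ) : normOne X = traceAbs X / Fintype.card ι := rfl

lemma trace_unitary_conj (U : Matrix ι ι ℂ) (hU : U ∈ Matrix.unitaryGroup ι ℂ)
    (D : Matrix ι ι ℂ) : (U * D * star U).trace = D.trace := by
  rw [Matrix.trace_mul_cycle, Matrix.mem_unitaryGroup_iff'.mp hU, Matrix.one_mul]

/-- spectral data for `Xᴴ X`. -/
noncomputable def sU (A : Matrix ι ι ℂ) : Matrix ι ι ℂ :=
  (Matrix.posSemidef_conjTranspose_mul_self A).1.eigenvectorUnitary

noncomputable def sE (A : Matrix ι ι ℂ) : ι → ℝ :=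
  (Matrix.posSemidef_conjTranspose_mul_self A).1.eigenvalues

noncomputable def sW (A : Matrix ι ι ℂ) : Matrix ι ι ℂ :=
  A * sU A * Matrix.diagonal (fun k => ((Real.sqrt (sE A k) : ℂ))⁻¹)

lemma sE_nonneg (A : Matrix ι ι ℂ) (k : ι) : 0 ≤ sE A k :=
  (Matrix.posSemidef_conjTranspose_mul_self A).eigenvalues_nonneg k

lemma sU_mem (A : Matrix ι ι ℂ) : sU A ∈ Matrix.unitaryGroup ι ℂ :=
  ((Matrix.posSemidef_conjTranspose_mul_self A).1.eigenvectorUnitary).2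

lemma star_sU_mul (A : Matrix ι ι ℂ) : star (sU A) * sU A = 1 :=
  Matrix.mem_unitaryGroup_iff'.mp (sU_mem A)

lemma sU_mul_star (A : Matrix ι ι ℂ) : sU A * star (sU A) = 1 :=
  Matrix.mem_unitaryGroup_iff.mp (sU_mem A)

lemma traceAbs_eq_sum_sqrt (X : Matrix ι ι ℂ) :
    traceAbs X = ∑ k, Real.sqrt (sE X k) := by
  rw [traceAbs, psdSqrt_of (Matrix.posSemidef_conjTranspose_mul_self X),
    trace_unitary_conj _ (Matrix.IsHermitian.eigenvectorUnitary _).2, Matrix.trace_diagonal]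
  simp [sE]

lemma traceAbs_nonneg (X : Matrix ι ι ℂ) : 0 ≤ traceAbs X := by
  rw [traceAbs_eq_sum_sqrt]
  exact Finset.sum_nonneg fun k _ => Real.sqrt_nonneg _

lemma spectral (A : Matrix ι ι ℂ) :
    Aᴴ * A = sU A * Matrix.diagonal (fun k => (sE A k : ℂ)) * star (sU A) := by
  have := (Matrix.posSemidef_conjTranspose_mul_self A).1.spectral_theorem
  rw [Unitary.conjStarAlgAut_apply] at this
  exact this

lemma MhM (A : Matrix ι ι ℂ) :
    (A * sU A)ᴴ * (A * sU A) = Matrix.diagonal (fun k => (sE A k : ℂ)) := by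
  rw [Matrix.conjTranspose_mul]
  calc (sU A)ᴴ * Aᴴ * (A * sU A) = star (sU A) * (Aᴴ * A) * sU A := by
        rw [Matrix.star_eq_conjTranspose]; noncomm_ring
    _ = star (sU A) * (sU A * Matrix.diagonal (fun k => (sE A k : ℂ)) * star (sU A)) * sU A := by
        rw [← spectral]
    _ = Matrix.diagonal (fun k => (sE A k : ℂ)) := by
        rw [show star (sU A) * (sU A * Matrix.diagonal (fun k => (sE A k : ℂ)) * star (sU A)) * sU A
            = (star (sU A) * sU A) * Matrix.diagonal (fun k => (sE A k : ℂ)) * (star (sU A) * sU A) by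
          noncomm_ring, star_sU_mul, Matrix.one_mul, Matrix.mul_one]

lemma col_zero (A : Matrix ι ι ℂ) (k : ι) (hk : sE A k = 0) (i : ι) : (A * sU A) i k = 0 := by
  have h0 : ((A * sU A)ᴴ * (A * sU A)) k k = 0 := by
    rw [MhM]; simp [hk]
  rw [Matrix.mul_apply] at h0
  have h0' : ∑ i, Complex.normSq ((A * sU A) i k) = 0 := by
    have h1 := congrArg Complex.re h0
    simp only [Complex.re_sum, Complex.zero_re] at h1
    rw [← h1]
    refine Finset.sum_congr rfl fun i _ => ?_
    rw [Matrix.conjTranspose_apply, Complex.star_def, ← Complex.normSq_eq_conj_mul_self,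
      Complex.ofReal_re]
  have := (Finset.sum_eq_zero_iff_of_nonneg (fun i _ => Complex.normSq_nonneg _)).mp h0' i
    (Finset.mem_univ i)
  exact Complex.normSq_eq_zero.mp this

lemma AUdiag (A : Matrix ι ι ℂ) :
    A * sU A * Matrix.diagonal (fun k => if sE A k = 0 then (0:ℂ) else 1) = A * sU A := by
  ext i k
  rw [Matrix.mul_diagonal]
  by_cases hk : sE A k = 0
  · simp [hk, col_zero A k hk i]
  · simp [hk]

lemma sqrt_ne_zero_of (A : Matrix ι ι ℂ) (k : ι) (hk : ¬ sE A k = 0) :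
    ((Real.sqrt (sE A k) : ℝ) : ℂ) ≠ 0 := by
  simp only [ne_eq, Complex.ofReal_eq_zero]
  exact Real.sqrt_ne_zero'.mpr (lt_of_le_of_ne (sE_nonneg A k) (Ne.symm hk))

lemma W_factor (A : Matrix ι ι ℂ) :
    sW A * Matrix.diagonal (fun k => ((Real.sqrt (sE A k) : ℝ) : ℂ)) = A * sU A := by
  rw [sW, Matrix.mul_assoc (A * sU A), Matrix.diagonal_mul_diagonal]
  rw [show (fun k => ((Real.sqrt (sE A k) : ℝ) : ℂ)⁻¹ * ((Real.sqrt (sE A k) : ℝ) : ℂ))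
      = fun k => if sE A k = 0 then (0:ℂ) else 1 by
    funext k
    by_cases hk : sE A k = 0
    · simp [hk]
    · simp [hk, inv_mul_cancel₀ (sqrt_ne_zero_of A k hk)]]
  exact AUdiag A

lemma factor (A : Matrix ι ι ℂ) :
    A = sW A * Matrix.diagonal (fun k => ((Real.sqrt (sE A k) : ℝ) : ℂ)) * star (sU A) := by
  rw [W_factor, Matrix.mul_assoc, sU_mul_star, Matrix.mul_one]

lemma sWhW (A : Matrix ι ι ℂ) :
    (sW A)ᴴ * sW A = Matrix.diagonal (fun k => if sE A k = 0 then (0:ℂ) else 1) := by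
  rw [sW, Matrix.conjTranspose_mul]
  have : (Matrix.diagonal (fun k => ((Real.sqrt (sE A k) : ℝ) : ℂ)⁻¹))ᴴ
      = Matrix.diagonal (fun k => ((Real.sqrt (sE A k) : ℝ) : ℂ)⁻¹) := by
    rw [Matrix.diagonal_conjTranspose]
    refine congrArg Matrix.diagonal (funext fun k => ?_)
    simp [Function.comp, Complex.conj_ofReal]
  rw [this, show (Matrix.diagonal (fun k => ((Real.sqrt (sE A k) : ℝ) : ℂ)⁻¹)) * (A * sU A)ᴴ * (A * sU A * Matrix.diagonal (fun k => ((Real.sqrt (sE A k) : ℝ) : ℂ)⁻¹))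
      = Matrix.diagonal (fun k => ((Real.sqrt (sE A k) : ℝ) : ℂ)⁻¹) * ((A * sU A)ᴴ * (A * sU A)) * Matrix.diagonal (fun k => ((Real.sqrt (sE A k) : ℝ) : ℂ)⁻¹) by noncomm_ring,
    MhM, Matrix.diagonal_mul_diagonal, Matrix.diagonal_mul_diagonal]
  refine congrArg Matrix.diagonal (funext fun k => ?_)
  by_cases hk : sE A k = 0
  · simp [hk, Real.sqrt_eq_zero']
  · have h1 : (sE A k : ℂ) = ((Real.sqrt (sE A k) : ℝ) : ℂ) * ((Real.sqrt (sE A k) : ℝ) : ℂ) := by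
      rw [← Complex.ofReal_mul, Real.mul_self_sqrt (sE_nonneg A k)]
    rw [if_neg hk, h1]
    field_simp [sqrt_ne_zero_of A k hk]

lemma sW_proj (A : Matrix ι ι ℂ) : sW A * ((sW A)ᴴ * sW A) = sW A := by
  rw [sWhW]
  ext i k
  rw [Matrix.mul_diagonal]
  by_cases hk : sE A k = 0
  · have : sW A i k = 0 := by
      rw [sW, Matrix.mul_diagonal, hk]
      simp
    simp [hk, this]
  · simp [hk]

lemma one_sub_sW_mul_star (A : Matrix ι ι ℂ) : (1 - sW A * (sW A)ᴴ).PosSemidef := by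
  set Q := sW A * (sW A)ᴴ with hQ
  have hherm : Q.IsHermitian := Matrix.isHermitian_mul_conjTranspose_self _
  have hidem : Q * Q = Q := by
    rw [hQ, show sW A * (sW A)ᴴ * (sW A * (sW A)ᴴ) = (sW A * ((sW A)ᴴ * sW A)) * (sW A)ᴴ by
      noncomm_ring, sW_proj]
  have hh : (1 - Q)ᴴ * (1 - Q) = 1 - Q := by
    rw [Matrix.conjTranspose_sub, Matrix.conjTranspose_one, hherm.eq]
    rw [Matrix.sub_mul, Matrix.mul_sub, Matrix.mul_sub, hidem]
    simp only [Matrix.one_mul, Matrix.mul_one]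
    abel
  rw [← hh]
  exact Matrix.posSemidef_conjTranspose_mul_self _

lemma psd_diag_re_nonneg {M : Matrix ι ι ℂ} (hM : M.PosSemidef) (k : ι) : 0 ≤ (M k k).re := by
  have h := hM.re_dotProduct_nonneg (Pi.single k 1)
  simpa [dotProduct, Matrix.mulVec_single, Pi.single_apply, Finset.sum_ite_eq',
    apply_ite] using h

lemma column_sq (P : Matrix ι ι ℂ) (k : ι) : ((Pᴴ * P) k k).re = ∑ i, ‖P i k‖ ^ 2 := by
  rw [Matrix.mul_apply, Complex.re_sum]
  refine Finset.sum_congr rfl fun i _ => ?_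
  rw [Matrix.conjTranspose_apply, Complex.star_def, ← Complex.normSq_eq_conj_mul_self,
    Complex.ofReal_re, Complex.normSq_eq_norm_sq]

lemma core (A Z V : Matrix ι ι ℂ) (hZ : (1 - Z * Zᴴ).PosSemidef)
    (hV : (1 - V * Vᴴ).PosSemidef) : ((Zᴴ * A * V).trace).re ≤ traceAbs A := by
  set D := Matrix.diagonal (fun k => ((Real.sqrt (sE A k) : ℝ) : ℂ)) with hD
  have hfac : Zᴴ * A * V = (Zᴴ * sW A) * (D * ((sU A)ᴴ * V)) := by
    conv_lhs => rw [factor A]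
    rw [Matrix.star_eq_conjTranspose]
    noncomm_ring
  rw [hfac, Matrix.trace_mul_comm, Matrix.mul_assoc]
  set N := ((sU A)ᴴ * V) * (Zᴴ * sW A) with hNdef
  have htr : (D * N).trace = ∑ k, ((Real.sqrt (sE A k) : ℝ) : ℂ) * N k k := by
    rw [Matrix.trace]
    exact Finset.sum_congr rfl fun k _ => by rw [Matrix.diag_apply, hD, Matrix.diagonal_mul]
  rw [htr, Complex.re_sum, traceAbs_eq_sum_sqrt]
  refine Finset.sum_le_sum fun k _ => ?_
  rw [Complex.re_ofReal_mul]
  set P := Vᴴ * sU A with hP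
  set S := Zᴴ * sW A with hS
  have hPS : (sU A)ᴴ * V = Pᴴ := by
    rw [hP, Matrix.conjTranspose_mul, Matrix.conjTranspose_conjTranspose]
  have hNkk : N k k = ∑ i, star (P i k) * S i k := by
    rw [hNdef, hPS, Matrix.mul_apply]
    exact Finset.sum_congr rfl fun i _ => by rw [Matrix.conjTranspose_apply]
  have ha0 : 0 ≤ ((Pᴴ * P) k k).re := by
    rw [column_sq]; exact Finset.sum_nonneg fun i _ => sq_nonneg _
  have hb0 : 0 ≤ ((Sᴴ * S) k k).re := by
    rw [column_sq]; exact Finset.sum_nonneg fun i _ => sq_nonneg _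
  have ha : ((Pᴴ * P) k k).re ≤ 1 := by
    have hPP : 1 - Pᴴ * P = (sU A)ᴴ * (1 - V * Vᴴ) * sU A := by
      rw [Matrix.mul_sub, Matrix.sub_mul, Matrix.mul_one,
        ← Matrix.star_eq_conjTranspose (sU A), star_sU_mul, hP, Matrix.conjTranspose_mul,
        Matrix.conjTranspose_conjTranspose, Matrix.star_eq_conjTranspose]
      noncomm_ring
    have hpsd : (1 - Pᴴ * P).PosSemidef := hPP ▸ hV.conjTranspose_mul_mul_same (sU A)
    have := psd_diag_re_nonneg hpsd k
    rw [Matrix.sub_apply, Complex.sub_re, Matrix.one_apply_eq, Complex.one_re] at this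
    linarith
  have hb : ((Sᴴ * S) k k).re ≤ 1 := by
    have hSS : (sW A)ᴴ * sW A - Sᴴ * S = (sW A)ᴴ * (1 - Z * Zᴴ) * sW A := by
      rw [hS, Matrix.conjTranspose_mul, Matrix.conjTranspose_conjTranspose]
      noncomm_ring
    have hpsd : ((sW A)ᴴ * sW A - Sᴴ * S).PosSemidef := hSS ▸ hZ.conjTranspose_mul_mul_same (sW A)
    have h1 := psd_diag_re_nonneg hpsd k
    rw [Matrix.sub_apply, Complex.sub_re] at h1
    have h2 : (((sW A)ᴴ * sW A) k k).re ≤ 1 := by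
      rw [sWhW, Matrix.diagonal_apply_eq]
      by_cases hk : sE A k = 0 <;> simp [hk]
    linarith
  have hre : (N k k).re ≤ ‖N k k‖ := Complex.re_le_norm _
  have hT : ‖N k k‖ ≤ ∑ i, ‖P i k‖ * ‖S i k‖ := by
    rw [hNkk]
    refine (norm_sum_le _ _).trans (Finset.sum_le_sum fun i _ => ?_)
    rw [norm_mul, norm_star]
  have hTnn : (0:ℝ) ≤ ∑ i, ‖P i k‖ * ‖S i k‖ :=
    Finset.sum_nonneg fun i _ => mul_nonneg (norm_nonneg _) (norm_nonneg _)
  have hCS := Finset.sum_mul_sq_le_sq_mul_sq Finset.univ (fun i => ‖P i k‖) (fun i => ‖S i k‖)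
  rw [← column_sq P k, ← column_sq S k] at hCS
  have h1 : (N k k).re ≤ 1 := by nlinarith
  have := Real.sqrt_nonneg (sE A k)
  nlinarith

lemma traceAbs_add (X Y : Matrix ι ι ℂ) : traceAbs (X + Y) ≤ traceAbs X + traceAbs Y := by
  set C := X + Y with hC
  have hV : (1 - sU C * (sU C)ᴴ).PosSemidef := by
    rw [← Matrix.star_eq_conjTranspose, sU_mul_star, sub_self]
    exact .zero
  have hZ := one_sub_sW_mul_star C
  have key : traceAbs C = (((sW C)ᴴ * C * sU C).trace).re := by
    have h1 : (sW C)ᴴ * C * sU C = ((sW C)ᴴ * sW C) *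
        (Matrix.diagonal (fun k => ((Real.sqrt (sE C k) : ℝ) : ℂ)) * (star (sU C) * sU C)) := by
      nth_rewrite 2 [factor C]
      rw [Matrix.star_eq_conjTranspose]
      noncomm_ring
    rw [h1, star_sU_mul, Matrix.mul_one, sWhW, Matrix.diagonal_mul_diagonal]
    have h2 : (fun k => (if sE C k = 0 then (0:ℂ) else 1) * ((Real.sqrt (sE C k) : ℝ) : ℂ))
        = fun k => ((Real.sqrt (sE C k) : ℝ) : ℂ) := by
      funext k
      by_cases hk : sE C k = 0 <;> simp [hk, Real.sqrt_eq_zero']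
    rw [h2, Matrix.trace_diagonal, Complex.re_sum, traceAbs_eq_sum_sqrt]
    exact Finset.sum_congr rfl fun k _ => by rw [Complex.ofReal_re]
  have split : (sW C)ᴴ * C * sU C = (sW C)ᴴ * X * sU C + (sW C)ᴴ * Y * sU C := by
    rw [hC, Matrix.mul_add, Matrix.add_mul]
  rw [key, split, Matrix.trace_add, Complex.add_re]
  exact add_le_add (core X _ _ hZ hV) (core Y _ _ hZ hV)

lemma traceAbs_zero : traceAbs (0 : Matrix ι ι ℂ) = 0 := by
  have : ((0 : Matrix ι ι ℂ))ᴴ * 0 = 0 := by simp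
  rw [traceAbs, this, psdSqrt_unique Matrix.PosSemidef.zero (by simp)]
  simp

lemma psdSqrt_eq {M S : Matrix ι ι ℂ} (hS : S.PosSemidef) (h : S ^ 2 = M) : psdSqrt M = S := by
  exact psdSqrt_unique hS (by rw [← pow_two]; exact h)

lemma posSemidef_real_smul {M : Matrix ι ι ℂ} (hM : M.PosSemidef) {c : ℝ} (hc : 0 ≤ c) :
    ((c : ℂ) • M).PosSemidef := by
  constructor
  · rw [Matrix.IsHermitian, Matrix.conjTranspose_smul, hM.1.eq, Complex.star_def,
      Complex.conj_ofReal]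
  · intro x
    exact (hM.smul (Complex.zero_le_real.mpr hc)).2 x

lemma traceAbs_smul (c : ℝ) (hc : 0 ≤ c) (X : Matrix ι ι ℂ) :
    traceAbs ((c : ℂ) • X) = c * traceAbs X := by
  have hXX : (Xᴴ * X).PosSemidef := Matrix.posSemidef_conjTranspose_mul_self X
  have h1 : ((c : ℂ) • X)ᴴ * ((c : ℂ) • X) = ((c^2 : ℝ) : ℂ) • (Xᴴ * X) := by
    rw [Matrix.conjTranspose_smul, Complex.star_def, Complex.conj_ofReal, Matrix.smul_mul,
      Matrix.mul_smul, smul_smul]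
    push_cast
    ring_nf
  have h2 : psdSqrt (((c : ℂ) • X)ᴴ * ((c : ℂ) • X)) = (c : ℂ) • psdSqrt (Xᴴ * X) := by
    rw [h1]
    refine psdSqrt_eq (posSemidef_real_smul ?_ hc) ?_
    · exact psdSqrt_psd hXX
    · rw [smul_pow, pow_two (psdSqrt (Xᴴ * X)), psdSqrt_mul_self hXX]
      norm_cast
  rw [traceAbs, h2, Matrix.trace_smul, smul_eq_mul, Complex.re_ofReal_mul, traceAbs]

lemma traceAbs_unitary_conj (B U V : Matrix ι ι ℂ) (hU : U ∈ Matrix.unitaryGroup ι ℂ)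
    (hV : V ∈ Matrix.unitaryGroup ι ℂ) : traceAbs (U * B * V) = traceAbs B := by
  have hBB : (Bᴴ * B).PosSemidef := Matrix.posSemidef_conjTranspose_mul_self B
  have h1 : (U * B * V)ᴴ * (U * B * V) = Vᴴ * (Bᴴ * B) * V := by
    rw [Matrix.conjTranspose_mul, Matrix.conjTranspose_mul]
    rw [show Vᴴ * (Bᴴ * Uᴴ) * (U * B * V) = Vᴴ * (Bᴴ * (Uᴴ * U) * B) * V by noncomm_ring,
      ← Matrix.star_eq_conjTranspose U, Matrix.mem_unitaryGroup_iff'.mp hU]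
    noncomm_ring
  have h2 : psdSqrt ((U * B * V)ᴴ * (U * B * V)) = Vᴴ * psdSqrt (Bᴴ * B) * V := by
    rw [h1]
    refine psdSqrt_eq ?_ ?_
    · exact (psdSqrt_psd hBB).conjTranspose_mul_mul_same V
    · rw [pow_two,
        show Vᴴ * psdSqrt (Bᴴ * B) * V * (Vᴴ * psdSqrt (Bᴴ * B) * V)
          = Vᴴ * (psdSqrt (Bᴴ * B) * (V * Vᴴ) * psdSqrt (Bᴴ * B)) * V
          by noncomm_ring,
        ← Matrix.star_eq_conjTranspose V, Matrix.mem_unitaryGroup_iff.mp hV, Matrix.mul_one]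
      rw [psdSqrt_mul_self hBB]
  rw [traceAbs, h2, ← Matrix.star_eq_conjTranspose V, Matrix.trace_mul_cycle,
    Matrix.mem_unitaryGroup_iff.mp hV, Matrix.one_mul, traceAbs]

lemma normOne_nonneg (X : Matrix ι ι ℂ) : 0 ≤ normOne X :=
  div_nonneg (traceAbs_nonneg X) (Nat.cast_nonneg _)

lemma normOne_add_le (X Y : Matrix ι ι ℂ) : normOne (X + Y) ≤ normOne X + normOne Y := by
  rw [normOne_eq, normOne_eq, normOne_eq, ← add_div]
  rcases Nat.eq_zero_or_pos (Fintype.card ι) with h | h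
  · simp [h]
  · exact (div_le_div_iff_of_pos_right (by exact_mod_cast h)).mpr (traceAbs_add X Y)

lemma normOne_sum_le {α : Type*} (s : Finset α) (f : α → Matrix ι ι ℂ) :
    normOne (∑ a ∈ s, f a) ≤ ∑ a ∈ s, normOne (f a) := by
  classical
  induction s using Finset.cons_induction with
  | empty => simp [normOne_eq, traceAbs_zero]
  | cons a s ha ih =>
    rw [Finset.sum_cons, Finset.sum_cons]
    exact (normOne_add_le _ _).trans (by linarith [ih])

/-! ## Quantum part -/

lemma card_QState (n : ℕ) : Fintype.card (QState n) = 2 ^ n := by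
  simp [Fintype.card_fun]

lemma ESet_empty {n : ℕ} (A : Obs n) : ESet (∅ : Finset (Fin n)) A = A := by
  ext x y
  rw [ESet, Matrix.of_apply, if_pos (by simp)]
  have h : ∀ z : QState n,
      A (fun j => if j ∈ (∅ : Finset (Fin n)) then z j else x j)
        (fun j => if j ∈ (∅ : Finset (Fin n)) then z j else y j) = A x y := by
    intro z
    congr 1 <;> funext j <;> simp
  rw [Finset.sum_congr rfl fun z _ => h z, Finset.sum_const, Finset.card_univ, card_QState,
    nsmul_eq_mul]
  push_cast
  rw [← mul_assoc, inv_mul_cancel₀ (by positivity), one_mul]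

/-- the pair swap equiv used to contract double averages. -/
def swapT {n : ℕ} (T : Finset (Fin n)) : (QState n × QState n) ≃ (QState n × QState n) where
  toFun p := (fun j => if j ∈ T then p.2 j else p.1 j, fun j => if j ∈ T then p.1 j else p.2 j)
  invFun p := (fun j => if j ∈ T then p.2 j else p.1 j, fun j => if j ∈ T then p.1 j else p.2 j)
  left_inv p := by
    refine Prod.ext (funext fun j => ?_) (funext fun j => ?_) <;> by_cases h : j ∈ T <;> simp [h]
  right_inv p := by
    refine Prod.ext (funext fun j => ?_) (funext fun j => ?_) <;> by_cases h : j ∈ T <;> simp [h]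

lemma double_avg {n : ℕ} (S T : Finset (Fin n)) (g : QState n → QState n → ℂ)
    (x y : QState n) :
    ∑ z : QState n, ∑ w : QState n,
        g (fun j => if j ∈ T then w j else if j ∈ S then z j else x j)
          (fun j => if j ∈ T then w j else if j ∈ S then z j else y j)
      = 2 ^ n * ∑ u : QState n,
          g (fun j => if j ∈ S ∪ T then u j else x j) (fun j => if j ∈ S ∪ T then u j else y j) := by
  have hterm : ∀ p : QState n × QState n,
      g (fun j => if j ∈ T then p.2 j else if j ∈ S then p.1 j else x j)
        (fun j => if j ∈ T then p.2 j else if j ∈ S then p.1 j else y j)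
      = g (fun j => if j ∈ S ∪ T then (swapT T p).1 j else x j)
          (fun j => if j ∈ S ∪ T then (swapT T p).1 j else y j) := by
    intro p
    have hrow : ∀ v : QState n, (fun j => if j ∈ T then p.2 j else if j ∈ S then p.1 j else v j)
        = (fun j => if j ∈ S ∪ T then (swapT T p).1 j else v j) := by
      intro v
      funext j
      by_cases hT : j ∈ T
      · simp [swapT, hT]
      · by_cases hS : j ∈ S <;> simp [swapT, hT, hS]
    rw [hrow x, hrow y]
  calc ∑ z : QState n, ∑ w : QState n,
        g (fun j => if j ∈ T then w j else if j ∈ S then z j else x j)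
          (fun j => if j ∈ T then w j else if j ∈ S then z j else y j)
      = ∑ p : QState n × QState n,
          g (fun j => if j ∈ T then p.2 j else if j ∈ S then p.1 j else x j)
            (fun j => if j ∈ T then p.2 j else if j ∈ S then p.1 j else y j) :=
        (Fintype.sum_prod_type' _).symm
    _ = ∑ p : QState n × QState n,
          g (fun j => if j ∈ S ∪ T then (swapT T p).1 j else x j)
            (fun j => if j ∈ S ∪ T then (swapT T p).1 j else y j) :=
        Finset.sum_congr rfl fun p _ => hterm p
    _ = ∑ p : QState n × QState n,
          g (fun j => if j ∈ S ∪ T then p.1 j else x j)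
            (fun j => if j ∈ S ∪ T then p.1 j else y j) :=
        Equiv.sum_comp (swapT T) (fun q : QState n × QState n =>
          g (fun j => if j ∈ S ∪ T then q.1 j else x j)
            (fun j => if j ∈ S ∪ T then q.1 j else y j))
    _ = ∑ z : QState n, ∑ _w : QState n,
          g (fun j => if j ∈ S ∪ T then z j else x j)
            (fun j => if j ∈ S ∪ T then z j else y j) := by
        exact Fintype.sum_prod_type _
    _ = 2 ^ n * ∑ u : QState n,
          g (fun j => if j ∈ S ∪ T then u j else x j)
            (fun j => if j ∈ S ∪ T then u j else y j) := by
        rw [Finset.mul_sum]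
        refine Finset.sum_congr rfl fun u _ => ?_
        rw [Finset.sum_const, Finset.card_univ, card_QState, nsmul_eq_mul]
        push_cast
        ring

lemma ESet_comp {n : ℕ} (S T : Finset (Fin n)) (A : Obs n) :
    ESet S (ESet T A) = ESet (S ∪ T) A := by
  ext x y
  have h2 : ((2:ℂ)^n) ≠ 0 := by positivity
  conv_lhs => rw [ESet]
  conv_rhs => rw [ESet]
  rw [Matrix.of_apply, Matrix.of_apply]
  by_cases hP1 : ∀ j ∈ S, x j = y j
  · rw [if_pos hP1]
    by_cases hP2 : ∀ j ∈ T, j ∉ S → x j = y j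
    · rw [if_pos (by
        intro j hj
        rcases Finset.mem_union.mp hj with h | h
        · exact hP1 j h
        · by_cases hS : j ∈ S
          · exact hP1 j hS
          · exact hP2 j h hS)]
      have hinner : ∀ z : QState n,
          ESet T A (fun j => if j ∈ S then z j else x j) (fun j => if j ∈ S then z j else y j)
          = ((2:ℂ)^n)⁻¹ * ∑ w : QState n,
              A (fun j => if j ∈ T then w j else if j ∈ S then z j else x j)
                (fun j => if j ∈ T then w j else if j ∈ S then z j else y j) := by
        intro z
        rw [ESet, Matrix.of_apply, if_pos (by
          intro j hj
          by_cases hS : j ∈ S <;> simp [hS, hP2 j hj])]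
      rw [Finset.sum_congr rfl fun z _ => hinner z, ← Finset.mul_sum]
      rw [← mul_assoc]
      -- now contract double sum
      have hsum := double_avg S T (fun r c => A r c) x y
      rw [hsum, ← mul_assoc]
      congr 1
      field_simp
    · rw [if_neg (by
        intro hc
        exact hP2 fun j hj hS => hc j (Finset.mem_union_right S hj))]
      have hinner : ∀ z : QState n,
          ESet T A (fun j => if j ∈ S then z j else x j) (fun j => if j ∈ S then z j else y j)
          = 0 := by
        intro z
        rw [ESet, Matrix.of_apply, if_neg]
        intro hc
        apply hP2
        intro j hj hS
        have := hc j hj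
        simpa [hS] using this
      rw [Finset.sum_congr rfl fun z _ => hinner z]
      simp
  · rw [if_neg hP1, if_neg (fun hc => hP1 fun j hj => hc j (Finset.mem_union_left T hj))]

lemma ESet_sub {n : ℕ} (S : Finset (Fin n)) (A B : Obs n) :
    ESet S (A - B) = ESet S A - ESet S B := by
  ext x y
  simp only [ESet, Matrix.of_apply, Matrix.sub_apply]
  by_cases h : ∀ j ∈ S, x j = y j
  · simp only [if_pos h, Finset.sum_sub_distrib, mul_sub]
  · simp [h]

lemma ESet_univ {n : ℕ} (A : Obs n) : ESet Finset.univ A = meanPart A := by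
  ext x y
  rw [ESet, Matrix.of_apply, meanPart, Matrix.smul_apply, Matrix.one_apply]
  by_cases h : x = y
  · rw [if_pos (fun j _ => by rw [h]), if_pos h, smul_eq_mul, mul_one]
    have hz : ∀ z : QState n,
        A (fun j => if j ∈ Finset.univ then z j else x j)
          (fun j => if j ∈ Finset.univ then z j else y j) = A z z := by
      intro z; congr 1 <;> funext j <;> simp
    rw [Finset.sum_congr rfl fun z _ => hz z]
    rw [show A.trace = ∑ z : QState n, A z z from rfl]
    rw [div_eq_inv_mul]
  · rw [if_neg (by
      intro hc
      exact h (funext fun j => hc j (Finset.mem_univ j))), if_neg h, smul_zero]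

/-! ### Pauli matrices -/

noncomputable def pauli : Fin 4 → Matrix (Fin 2) (Fin 2) ℂ :=
  ![!![1, 0; 0, 1], !![0, 1; 1, 0], !![0, -Complex.I; Complex.I, 0], !![1, 0; 0, -1]]

lemma pauli_sum (s t a b : Fin 2) :
    ∑ p : Fin 4, pauli p s a * pauli p b t = if s = t ∧ a = b then 2 else 0 := by
  fin_cases s <;> fin_cases t <;> fin_cases a <;> fin_cases b <;>
    simp [pauli, Fin.sum_univ_four] <;>
    ring_nf <;>
    simp [Complex.I_sq]

lemma pauli_mul_self (p : Fin 4) (a b : Fin 2) :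
    ∑ c : Fin 2, pauli p a c * pauli p c b = if a = b then 1 else 0 := by
  fin_cases p <;> fin_cases a <;> fin_cases b <;>
    simp [pauli, Fin.sum_univ_two] <;>
    ring_nf <;>
    simp [Complex.I_sq]

noncomputable def PJ {n : ℕ} (j : Fin n) (p : Fin 4) : Obs n :=
  Matrix.of fun x y => pauli p (x j) (y j) * (if ∀ k, k ≠ j → x k = y k then 1 else 0)

lemma pauli_star (p : Fin 4) (a b : Fin 2) : star (pauli p a b) = pauli p b a := by
  fin_cases p <;> fin_cases a <;> fin_cases b <;> simp [pauli]

lemma PJ_herm {n : ℕ} (j : Fin n) (p : Fin 4) : (PJ j p)ᴴ = PJ j p := by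
  ext x y
  rw [Matrix.conjTranspose_apply, PJ, Matrix.of_apply, Matrix.of_apply, star_mul']
  rw [show (star (if ∀ k, k ≠ j → y k = x k then (1:ℂ) else 0))
      = (if ∀ k, k ≠ j → x k = y k then (1:ℂ) else 0) by
    rw [if_congr (Iff.intro (fun h k hk => (h k hk).symm) (fun h k hk => (h k hk).symm))
      rfl rfl]
    split_ifs <;> simp]
  rw [pauli_star, mul_comm]

lemma sum_update {n : ℕ} (j : Fin n) (x : QState n) (g : QState n → ℂ) :
    (∑ x' : QState n, if ∀ k, k ≠ j → x k = x' k then g x' else 0)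
      = ∑ a : Fin 2, g (Function.update x j a) := by
  classical
  rw [Finset.sum_ite, Finset.sum_const_zero, add_zero]
  have hset : Finset.univ.filter (fun x' : QState n => ∀ k, k ≠ j → x k = x' k)
      = Finset.image (fun a => Function.update x j a) Finset.univ := by
    ext x'
    simp only [Finset.mem_filter, Finset.mem_univ, true_and, Finset.mem_image]
    constructor
    · intro h
      exact ⟨x' j, (funext fun k => by
        by_cases hk : k = j
        · subst hk; rw [Function.update_self]
        · rw [Function.update_of_ne hk]; exact h k hk)⟩
    · rintro ⟨a, rfl⟩ k hk
      rw [Function.update_of_ne hk]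
  rw [hset, Finset.sum_image (fun a _ b _ h => Function.update_injective x j h)]

lemma PJ_mul_apply {n : ℕ} (j : Fin n) (p : Fin 4) (B : Obs n) (x y : QState n) :
    (PJ j p * B) x y = ∑ a : Fin 2, pauli p (x j) a * B (Function.update x j a) y := by
  rw [Matrix.mul_apply]
  rw [Finset.sum_congr rfl (fun x' _ => show PJ j p x x' * B x' y
      = if ∀ k, k ≠ j → x k = x' k then pauli p (x j) (x' j) * B x' y else 0 by
    rw [PJ, Matrix.of_apply]
    split_ifs <;> ring)]
  rw [sum_update]
  exact Finset.sum_congr rfl fun a _ => by rw [Function.update_self]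

lemma mul_PJ_apply {n : ℕ} (j : Fin n) (q : Fin 4) (B : Obs n) (x y : QState n) :
    (B * PJ j q) x y = ∑ b : Fin 2, B x (Function.update y j b) * pauli q b (y j) := by
  rw [Matrix.mul_apply]
  rw [Finset.sum_congr rfl (fun y' _ => show B x y' * PJ j q y' y
      = if ∀ k, k ≠ j → y k = y' k then B x y' * pauli q (y' j) (y j) else 0 by
    rw [PJ, Matrix.of_apply,
      if_congr (Iff.intro (fun h k hk => (h k hk).symm) (fun h k hk => (h k hk).symm)) rfl rfl]
    split_ifs <;> ring)]
  rw [sum_update]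
  exact Finset.sum_congr rfl fun b _ => by rw [Function.update_self]

lemma PJ_mul_PJ {n : ℕ} (j : Fin n) (p : Fin 4) : PJ j p * PJ j p = 1 := by
  ext x y
  rw [PJ_mul_apply]
  rw [Finset.sum_congr rfl (fun a _ => show pauli p (x j) a * PJ j p (Function.update x j a) y
      = pauli p (x j) a * pauli p a (y j) * (if ∀ k, k ≠ j → x k = y k then (1:ℂ) else 0) by
    have hcond : (∀ k, k ≠ j → Function.update x j a k = y k) ↔ (∀ k, k ≠ j → x k = y k) := by
      constructor
      · intro h k hk
        rw [← h k hk, Function.update_of_ne hk]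
      · intro h k hk
        rw [Function.update_of_ne hk]
        exact h k hk
    rw [PJ, Matrix.of_apply, Function.update_self, if_congr hcond rfl rfl]
    ring)]
  rw [← Finset.sum_mul, pauli_mul_self, Matrix.one_apply]
  by_cases h1 : x j = y j
  · by_cases h2 : ∀ k, k ≠ j → x k = y k
    · rw [if_pos h1, if_pos h2, if_pos (funext fun k => by
        by_cases hk : k = j
        · subst hk; exact h1
        · exact h2 k hk)]
      simp
    · rw [if_pos h1, if_neg h2, if_neg (fun hc => h2 fun k _ => congrFun hc k)]
      simp
  · rw [if_neg h1, if_neg (fun hc => h1 (congrFun hc j))]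
    simp

lemma PJ_mem_unitary {n : ℕ} (j : Fin n) (p : Fin 4) : PJ j p ∈ Matrix.unitaryGroup (QState n) ℂ := by
  rw [Matrix.mem_unitaryGroup_iff']
  rw [Matrix.star_eq_conjTranspose, PJ_herm, PJ_mul_PJ]

lemma eval_avg {n : ℕ} (j : Fin n) (f : Fin 2 → ℂ) :
    ((2:ℂ)^n)⁻¹ * ∑ z : QState n, f (z j) = (2:ℂ)⁻¹ * ∑ a : Fin 2, f a := by
  set m := Fintype.card ({k : Fin n // k ≠ j} → Fin 2) with hm
  have h1 : ∑ z : QState n, f (z j)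
      = ∑ q : Fin 2 × ({k : Fin n // k ≠ j} → Fin 2), f (((Equiv.funSplitAt j (Fin 2)).symm q) j) :=
    (Equiv.sum_comp (Equiv.funSplitAt j (Fin 2)).symm (fun z => f (z j))).symm
  have h2 : ∀ q : Fin 2 × ({k : Fin n // k ≠ j} → Fin 2),
      ((Equiv.funSplitAt j (Fin 2)).symm q) j = q.1 := by
    intro q
    simp [Equiv.funSplitAt, Equiv.piSplitAt]
  have h3 : (∑ q : Fin 2 × ({k : Fin n // k ≠ j} → Fin 2), f q.1) = ∑ a : Fin 2, (m : ℂ) * f a := by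
    rw [Fintype.sum_prod_type]
    exact Finset.sum_congr rfl fun a _ => by
      simp [Finset.sum_const, Finset.card_univ, nsmul_eq_mul, hm]
  have hcard : (2:ℕ) ^ n = 2 * m := by
    rw [← card_QState n, Fintype.card_congr (Equiv.funSplitAt j (Fin 2)), Fintype.card_prod,
      Fintype.card_fin]
  have h2n : ((2:ℂ))^n = 2 * (m:ℂ) := by
    have := congrArg (fun t : ℕ => (t : ℂ)) hcard
    push_cast at this
    exact this
  have hmne : (m : ℂ) ≠ 0 := by
    simp only [ne_eq, Nat.cast_eq_zero]
    exact Fintype.card_ne_zero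
  rw [h1, Finset.sum_congr rfl fun q _ => by rw [h2 q], h3, ← Finset.mul_sum, ← mul_assoc,
    h2n]
  congr 1
  field_simp

lemma ESet_single {n : ℕ} (j : Fin n) (A : Obs n) :
    ESet {j} A = ∑ p : Fin 4, (4:ℂ)⁻¹ • (PJ j p * A * PJ j p) := by
  ext x y
  have common_eq : (if x j = y j then
      (2:ℂ)⁻¹ * ∑ a : Fin 2, A (Function.update x j a) (Function.update y j a) else 0) =
      (∑ p : Fin 4, (4:ℂ)⁻¹ • (PJ j p * A * PJ j p)) x y := by
    rw [Matrix.sum_apply]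
    simp only [Matrix.smul_apply, smul_eq_mul]
    have hterm : ∀ p : Fin 4, (PJ j p * A * PJ j p) x y
        = ∑ b : Fin 2, ∑ a : Fin 2, pauli p (x j) a *
            A (Function.update x j a) (Function.update y j b) * pauli p b (y j) := by
      intro p
      rw [mul_PJ_apply]
      refine Finset.sum_congr rfl fun b _ => ?_
      rw [PJ_mul_apply, Finset.sum_mul]
    have step1 : ∑ p : Fin 4, (4:ℂ)⁻¹ * (PJ j p * A * PJ j p) x y
        = ∑ b : Fin 2, ∑ a : Fin 2, ((4:ℂ)⁻¹ *
            ∑ p : Fin 4, pauli p (x j) a * pauli p b (y j)) *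
            A (Function.update x j a) (Function.update y j b) := by
      rw [Finset.sum_congr rfl fun p (_ : p ∈ Finset.univ) => by
        rw [hterm p, Finset.mul_sum]]
      rw [Finset.sum_comm]
      refine Finset.sum_congr rfl fun b _ => ?_
      calc ∑ p : Fin 4, (4:ℂ)⁻¹ * ∑ a : Fin 2, pauli p (x j) a *
              A (Function.update x j a) (Function.update y j b) * pauli p b (y j)
          = ∑ p : Fin 4, ∑ a : Fin 2, (4:ℂ)⁻¹ * (pauli p (x j) a * pauli p b (y j)) *
              A (Function.update x j a) (Function.update y j b) := by
            refine Finset.sum_congr rfl fun p _ => ?_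
            rw [Finset.mul_sum]
            exact Finset.sum_congr rfl fun a _ => by ring
        _ = ∑ a : Fin 2, ∑ p : Fin 4, (4:ℂ)⁻¹ * (pauli p (x j) a * pauli p b (y j)) *
              A (Function.update x j a) (Function.update y j b) := Finset.sum_comm
        _ = ∑ a : Fin 2, ((4:ℂ)⁻¹ * ∑ p : Fin 4, pauli p (x j) a * pauli p b (y j)) *
              A (Function.update x j a) (Function.update y j b) := by
            refine Finset.sum_congr rfl fun a _ => ?_
            rw [← Finset.sum_mul, ← Finset.mul_sum]
    rw [step1]
    rw [Finset.sum_congr rfl fun b (_ : b ∈ Finset.univ) =>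
      Finset.sum_congr rfl fun a (_ : a ∈ Finset.univ) => by rw [pauli_sum (x j) (y j) a b]]
    by_cases hxy : x j = y j
    · rw [if_pos hxy]
      have hcollapse : ∀ b : Fin 2, ∑ a : Fin 2,
          ((4:ℂ)⁻¹ * if x j = y j ∧ a = b then 2 else 0) *
            A (Function.update x j a) (Function.update y j b)
          = (2:ℂ)⁻¹ * A (Function.update x j b) (Function.update y j b) := by
        intro b
        rw [Finset.sum_congr rfl fun a (_ : a ∈ Finset.univ) => show
          ((4:ℂ)⁻¹ * if x j = y j ∧ a = b then 2 else 0) *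
            A (Function.update x j a) (Function.update y j b)
          = (if a = b then (2:ℂ)⁻¹ * A (Function.update x j a) (Function.update y j b) else 0) by
            by_cases hab : a = b
            · rw [if_pos ⟨hxy, hab⟩, if_pos hab]; norm_num
            · rw [if_neg (fun hc => hab hc.2), if_neg hab]; ring]
        rw [Finset.sum_ite_eq' Finset.univ b
          (fun a => (2:ℂ)⁻¹ * A (Function.update x j a) (Function.update y j b)),
          if_pos (Finset.mem_univ b)]
      rw [Finset.sum_congr rfl fun b _ => hcollapse b, Finset.mul_sum]
    · rw [if_neg hxy]
      symm
      refine Finset.sum_eq_zero fun b _ => Finset.sum_eq_zero fun a _ => ?_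
      rw [if_neg (fun hc => hxy hc.1)]
      ring
  rw [← common_eq, ESet, Matrix.of_apply]
  have hc : (∀ k ∈ ({j} : Finset (Fin n)), x k = y k) ↔ x j = y j := by simp
  by_cases hxy : x j = y j
  · rw [if_pos (hc.mpr hxy), if_pos hxy]
    have hpat : ∀ z : QState n,
        A (fun k => if k ∈ ({j} : Finset (Fin n)) then z k else x k)
          (fun k => if k ∈ ({j} : Finset (Fin n)) then z k else y k)
        = A (Function.update x j (z j)) (Function.update y j (z j)) := by
      intro z
      have h1 : ∀ v : QState n, (fun k => if k ∈ ({j} : Finset (Fin n)) then z k else v k)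
          = Function.update v j (z j) := by
        intro v
        funext k
        by_cases hk : k = j
        · subst hk; simp
        · simp [Function.update_of_ne hk, hk]
      rw [h1 x, h1 y]
    rw [Finset.sum_congr rfl fun z _ => hpat z]
    exact eval_avg j (fun a => A (Function.update x j a) (Function.update y j a))
  · rw [if_neg (fun h => hxy (hc.mp h)), if_neg hxy]

lemma normOne_real_smul (c : ℝ) (hc : 0 ≤ c) (X : Matrix ι ι ℂ) :
    normOne ((c : ℂ) • X) = c * normOne X := by
  rw [normOne_eq, normOne_eq, traceAbs_smul c hc, mul_div_assoc]

lemma normOne_ESet_single_le {n : ℕ} (j : Fin n) (B : Obs n) :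
    normOne (ESet {j} B) ≤ normOne B := by
  rw [ESet_single]
  refine (normOne_sum_le _ _).trans ?_
  have hp : ∀ p : Fin 4, normOne ((4:ℂ)⁻¹ • (PJ j p * B * PJ j p)) = (4:ℝ)⁻¹ * normOne B := by
    intro p
    have h1 := normOne_real_smul ((4:ℝ)⁻¹) (by norm_num) (PJ j p * B * PJ j p)
    rw [show ((((4:ℝ)⁻¹ : ℝ)) : ℂ) = (4:ℂ)⁻¹ by push_cast; ring] at h1
    rw [h1, normOne_eq, normOne_eq,
      traceAbs_unitary_conj B _ _ (PJ_mem_unitary j p) (PJ_mem_unitary j p)]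
  rw [Finset.sum_congr rfl fun p _ => hp p, Finset.sum_const, Finset.card_univ, Fintype.card_fin,
    nsmul_eq_mul]
  linarith [normOne_nonneg B]

lemma normOne_ESet_le {n : ℕ} (S : Finset (Fin n)) (A : Obs n) :
    normOne (ESet S A) ≤ normOne A := by
  classical
  induction S using Finset.induction_on with
  | empty => rw [ESet_empty]
  | @insert j S hj ih =>
    have h1 : ESet (insert j S) A = ESet {j} (ESet S A) := by
      rw [ESet_comp, ← Finset.insert_eq]
    rw [h1]
    exact (normOne_ESet_single_le _ _).trans ih

/-- **Quantum L¹-Poincaré inequality.** -/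
theorem quantum_L1_poincare (n : ℕ) (hn : 1 ≤ n) (A : Obs n) :
    normOne (A - meanPart A) ≤ Real.pi * inf1 A := by
  classical
  set Sk : ℕ → Finset (Fin n) := fun k => Finset.univ.filter (fun i => (i : ℕ) < k) with hSk
  set g : ℕ → Obs n := fun k => ESet (Sk k) A with hg
  set T : ℕ → Obs n := fun k =>
    if h : k < n then ESet (Sk k) (dCoord ⟨k, h⟩ A) else 0 with hT
  have hg0 : g 0 = A := by
    have h0 : Sk 0 = ∅ := by ext i; simp [hSk]
    show ESet (Sk 0) A = A
    rw [h0, ESet_empty]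
  have hgn : g n = meanPart A := by
    have h0 : Sk n = Finset.univ := by ext i; simp [hSk, i.isLt]
    show ESet (Sk n) A = meanPart A
    rw [h0, ESet_univ]
  have hstep : ∀ k ∈ Finset.range n, g k - g (k + 1) = T k := by
    intro k hk
    have hkn : k < n := Finset.mem_range.mp hk
    have hunion : Sk k ∪ {(⟨k, hkn⟩ : Fin n)} = Sk (k + 1) := by
      ext i
      simp only [hSk, Finset.mem_union, Finset.mem_filter, Finset.mem_univ, true_and,
        Finset.mem_singleton, Fin.ext_iff, Nat.lt_succ_iff_lt_or_eq]
    show ESet (Sk k) A - ESet (Sk (k+1)) A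
        = if h : k < n then ESet (Sk k) (dCoord ⟨k, h⟩ A) else 0
    rw [dif_pos hkn, dCoord, ESet_sub, ESet_comp, hunion]
  have htel : A - meanPart A = ∑ k ∈ Finset.range n, T k := by
    calc A - meanPart A = g 0 - g n := by rw [hg0, hgn]
      _ = ∑ k ∈ Finset.range n, (g k - g (k + 1)) := (Finset.sum_range_sub' g n).symm
      _ = ∑ k ∈ Finset.range n, T k := Finset.sum_congr rfl hstep
  have hb : normOne (A - meanPart A) ≤ ∑ k ∈ Finset.range n, normOne (T k) := by
    rw [htel]
    exact normOne_sum_le _ _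
  have hb2 : ∑ k ∈ Finset.range n, normOne (T k)
      ≤ ∑ k ∈ Finset.range n, (fun k => if h : k < n then normOne (dCoord ⟨k, h⟩ A) else 0) k := by
    refine Finset.sum_le_sum fun k hk => ?_
    have hkn : k < n := Finset.mem_range.mp hk
    show normOne (if h : k < n then ESet (Sk k) (dCoord ⟨k, h⟩ A) else 0)
        ≤ if h : k < n then normOne (dCoord ⟨k, h⟩ A) else 0
    rw [dif_pos hkn, dif_pos hkn]
    exact normOne_ESet_le _ _
  have hsum2 : ∑ k ∈ Finset.range n,
      (fun k => if h : k < n then normOne (dCoord ⟨k, h⟩ A) else 0) k = inf1 A := by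
    rw [inf1, ← Fin.sum_univ_eq_sum_range]
    refine Finset.sum_congr rfl fun i _ => ?_
    simp only [dif_pos i.isLt]
  have hfin : normOne (A - meanPart A) ≤ inf1 A := by
    calc normOne (A - meanPart A) ≤ _ := hb
      _ ≤ _ := hb2
      _ = inf1 A := hsum2
  have hpi : 1 ≤ Real.pi := by linarith [Real.pi_gt_three]
  have hinf : 0 ≤ inf1 A := Finset.sum_nonneg fun j _ => normOne_nonneg _
  nlinarith

end QPaper
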